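/- Let ν ∈ ℝ. For every t ∈ ℝ, lim_{s→0, s≠0} [ G^B_{n_x n_x n_y} + ν G^B_{τ_x τ_x n_y} ](γ(t), γ(t+s)) = (3ν − 1)κ(t)/(8π). Here, with r = x − γ(s′), n_x = n(t), τ_x = τ(t), n_y = n(s′): G^B_{n_x n_x n_y}(x, γ(s′)) = −(1/(2π))(r·n_x)(n_x·n_y)/‖r‖² + (1/(2π))(r·n_y)(r·n_x)²/‖r‖⁴ − (1/(4π))(r·n_y)/‖r‖², and G^B_{τ_x τ_x n_y}(x, γ(s′)) = −(1/(2π))(r·τ_x)(τ_x·n_y)/‖r‖² + (1/(2π))(r·n_y)(r·τ_x)²/‖r‖⁴ − (1/(4π))(r·n_y)/‖r‖², evaluated at x = γ(t). -/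

import Mathlib

/-!
Write `r(s) = γ(t) - γ(t + s)`. One or two applications of L'Hôpital's rule give the leading
behaviour of the inner products entering the kernels: `r·τ(t) ~ -s`, `r·n(t) ~ κ s²/2`,
`r·n(t+s) ~ -κ s²/2`, `τ(t)·n(t+s) ~ κ s` and `n(t)·n(t+s) → 1`; since `τ(t), n(t)` is an
orthonormal frame, also `‖r‖² ~ s²`. After dividing numerators and denominators by the matching
powers of `s`, the `n n n` kernel tends to `-κ/(8π)` and the `τ τ n` kernel to `3κ/(8π)`.
-/

open Real Filter Topology MeasureTheory

noncomputable section

/-- Euclidean dot product on `ℝ × ℝ`. -/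
def dot2 (v w : ℝ × ℝ) : ℝ := v.1 * w.1 + v.2 * w.2

/-- Unit tangent vector `τ(s) = γ′(s)`. -/
def tang (γ : ℝ → ℝ × ℝ) (s : ℝ) : ℝ × ℝ := deriv γ s

/-- Unit normal vector `n(s) = (τ₂(s), −τ₁(s))`. -/
def nor (γ : ℝ → ℝ × ℝ) (s : ℝ) : ℝ × ℝ := ((deriv γ s).2, -(deriv γ s).1)

/-- Signed curvature `κ(s) = −γ″(s)·n(s)`. -/
def curv (γ : ℝ → ℝ × ℝ) (s : ℝ) : ℝ := -(dot2 (deriv (deriv γ) s) (nor γ s))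

/-- Explicit formula for `G^B_{n_x n_x n_y}(x, γ(s'))`, with `r = x − γ(s')`,
`n_x = n(t)`, `n_y = n(s')`. -/
def GB_nx_nx_ny (γ : ℝ → ℝ × ℝ) (t : ℝ) (x : ℝ × ℝ) (s' : ℝ) : ℝ :=
  -(1 / (2 * π)) * dot2 (x - γ s') (nor γ t) * dot2 (nor γ t) (nor γ s')
      / dot2 (x - γ s') (x - γ s')
    + 1 / (2 * π) * dot2 (x - γ s') (nor γ s') * (dot2 (x - γ s') (nor γ t)) ^ 2
      / (dot2 (x - γ s') (x - γ s')) ^ 2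
    - 1 / (4 * π) * dot2 (x - γ s') (nor γ s') / dot2 (x - γ s') (x - γ s')

/-- Explicit formula for `G^B_{τ_x τ_x n_y}(x, γ(s'))`, with `r = x − γ(s')`,
`τ_x = τ(t)`, `n_y = n(s')`. -/
def GB_tx_tx_ny (γ : ℝ → ℝ × ℝ) (t : ℝ) (x : ℝ × ℝ) (s' : ℝ) : ℝ :=
  -(1 / (2 * π)) * dot2 (x - γ s') (tang γ t) * dot2 (tang γ t) (nor γ s')
      / dot2 (x - γ s') (x - γ s')
    + 1 / (2 * π) * dot2 (x - γ s') (nor γ s') * (dot2 (x - γ s') (tang γ t)) ^ 2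
      / (dot2 (x - γ s') (x - γ s')) ^ 2
    - 1 / (4 * π) * dot2 (x - γ s') (nor γ s') / dot2 (x - γ s') (x - γ s')

theorem HasDerivAt.fst {f : ℝ → ℝ × ℝ} {v : ℝ × ℝ} {x : ℝ} (h : HasDerivAt f v x) :
    HasDerivAt (fun u => (f u).1) v.1 x :=
  (ContinuousLinearMap.fst ℝ ℝ ℝ).hasFDerivAt.comp_hasDerivAt x h

theorem HasDerivAt.snd {f : ℝ → ℝ × ℝ} {v : ℝ × ℝ} {x : ℝ} (h : HasDerivAt f v x) :
    HasDerivAt (fun u => (f u).2) v.2 x :=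
  (ContinuousLinearMap.snd ℝ ℝ ℝ).hasFDerivAt.comp_hasDerivAt x h

theorem HasDerivAt.dot2 {f g : ℝ → ℝ × ℝ} {v w : ℝ × ℝ} {x : ℝ}
    (hf : HasDerivAt f v x) (hg : HasDerivAt g w x) :
    HasDerivAt (fun u => _root_.dot2 (f u) (g u))
      (_root_.dot2 v (g x) + _root_.dot2 (f x) w) x := by
  simp only [_root_.dot2]
  exact ((hf.fst.mul hg.fst).add (hf.snd.mul hg.snd)).congr_deriv (by ring)

theorem tendsto_sq_nhdsNE_zero : Tendsto (fun s : ℝ => s ^ 2) (𝓝[≠] 0) (𝓝 0) :=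
  tendsto_nhdsWithin_of_tendsto_nhds (by simpa using (continuous_pow 2).tendsto (0 : ℝ))

theorem tendsto_div_of_hasDerivAt_zero {g : ℝ → ℝ} {c : ℝ} (hg0 : g 0 = 0)
    (hg : HasDerivAt g c 0) : Tendsto (fun s => g s / s) (𝓝[≠] 0) (𝓝 c) := by
  simpa [hg0, div_eq_inv_mul] using hasDerivAt_iff_tendsto_slope_zero.mp hg

theorem tendsto_div_sq_of_hasDerivAt_zero {f f' : ℝ → ℝ} {c : ℝ}
    (hf : ∀ s, HasDerivAt f (f' s) s) (hf0 : f 0 = 0) (hf'0 : f' 0 = 0)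
    (hf' : HasDerivAt f' c 0) : Tendsto (fun s => f s / s ^ 2) (𝓝[≠] 0) (𝓝 (c / 2)) := by
  refine HasDerivAt.lhopital_zero_nhdsNE (f' := f') (g' := fun s => 2 * s)
    (.of_forall hf) (.of_forall fun s => by simpa using hasDerivAt_pow 2 s) ?_ ?_ ?_ ?_
  · filter_upwards [self_mem_nhdsWithin] with s hs using mul_ne_zero two_ne_zero hs
  · exact tendsto_nhdsWithin_of_tendsto_nhds (by simpa [hf0] using (hf 0).continuousAt.tendsto)
  · exact tendsto_sq_nhdsNE_zero
  · simpa only [div_div, mul_comm] using (tendsto_div_of_hasDerivAt_zero hf'0 hf').div_const 2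

def perp (v : ℝ × ℝ) : ℝ × ℝ := (v.2, -v.1)

theorem HasDerivAt.perp {f : ℝ → ℝ × ℝ} {v : ℝ × ℝ} {x : ℝ} (h : HasDerivAt f v x) :
    HasDerivAt (fun u => _root_.perp (f u)) (_root_.perp v) x :=
  h.snd.prodMk h.fst.neg

theorem dot2_perp_self (v : ℝ × ℝ) : dot2 v (perp v) = 0 := by
  simp only [dot2, perp]; ring

theorem dot2_perp_perp (v w : ℝ × ℝ) : dot2 (perp v) (perp w) = dot2 v w := by
  simp only [dot2, perp]; ring

theorem dot2_self_eq_sq_add_sq {u : ℝ × ℝ} (hu : dot2 u u = 1) (v : ℝ × ℝ) :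
    dot2 v v = dot2 v u ^ 2 + dot2 v (perp u) ^ 2 := by
  simp only [dot2, perp] at hu ⊢
  linear_combination (-v.1 ^ 2 - v.2 ^ 2) * hu

theorem nor_eq_perp (γ : ℝ → ℝ × ℝ) (s : ℝ) : nor γ s = perp (deriv γ s) := rfl

section PlaneCurve

variable {γ : ℝ → ℝ × ℝ} {t : ℝ}

theorem hasDerivAt_chord (hγ : Differentiable ℝ γ) (s : ℝ) :
    HasDerivAt (fun u => γ t - γ (t + u)) (-deriv γ (t + s)) s :=
  ((hγ (t + s)).hasDerivAt.comp_const_add t s).const_sub (γ t)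

theorem hasDerivAt_nor (hγ : Differentiable ℝ (deriv γ)) (s : ℝ) :
    HasDerivAt (fun u => nor γ (t + u)) (perp (deriv (deriv γ) (t + s))) s :=
  ((hγ (t + s)).hasDerivAt.comp_const_add t s).perp

theorem tendsto_chord_dot_tang_div (hγ : Differentiable ℝ γ)
    (hunit : dot2 (deriv γ t) (deriv γ t) = 1) :
    Tendsto (fun s => dot2 (γ t - γ (t + s)) (tang γ t) / s) (𝓝[≠] 0) (𝓝 (-1)) := by
  refine tendsto_div_of_hasDerivAt_zero (by simp [dot2]) ?_
  refine ((hasDerivAt_chord hγ 0).dot2 (hasDerivAt_const 0 (tang γ t))).congr_deriv ?_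
  simp only [dot2] at hunit
  simp [dot2, tang]
  linarith

theorem tendsto_chord_dot_nor_div_sq (hγ : ContDiff ℝ 2 γ) :
    Tendsto (fun s => dot2 (γ t - γ (t + s)) (nor γ t) / s ^ 2) (𝓝[≠] 0)
      (𝓝 (curv γ t / 2)) := by
  refine tendsto_div_sq_of_hasDerivAt_zero (f' := fun s => dot2 (-deriv γ (t + s)) (nor γ t))
    (fun s => ((hasDerivAt_chord (hγ.differentiable (by norm_num)) s).dot2
      (hasDerivAt_const s (nor γ t))).congr_deriv (by simp [dot2]))
    (by simp [dot2]) (by simp [dot2, nor]; ring) ?_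
  refine (((hγ.differentiable_deriv_two (t + 0)).hasDerivAt.comp_const_add t 0).neg.dot2
    (hasDerivAt_const 0 (nor γ t))).congr_deriv ?_
  simp [dot2, curv]; ring

theorem tendsto_tang_dot_nor_add_div (hγ : ContDiff ℝ 2 γ) :
    Tendsto (fun s => dot2 (tang γ t) (nor γ (t + s)) / s) (𝓝[≠] 0) (𝓝 (curv γ t)) := by
  refine tendsto_div_of_hasDerivAt_zero (by rw [add_zero]; exact dot2_perp_self _) ?_
  refine ((hasDerivAt_const 0 (tang γ t)).dot2
    (hasDerivAt_nor hγ.differentiable_deriv_two 0)).congr_deriv ?_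
  simp [dot2, tang, curv, nor, perp]; ring

theorem tendsto_chord_dot_nor_add_div_sq (hγ : ContDiff ℝ 3 γ) :
    Tendsto (fun s => dot2 (γ t - γ (t + s)) (nor γ (t + s)) / s ^ 2) (𝓝[≠] 0)
      (𝓝 (-curv γ t / 2)) := by
  have hγ₂ : ContDiff ℝ 2 γ := hγ.of_le (by norm_num)
  have hγ'' : Differentiable ℝ (deriv (deriv γ)) :=
    (hγ.deriv' (n := 2)).differentiable_deriv_two
  -- the other product-rule term `-τ(t+s)·n(t+s)` vanishes identically
  refine tendsto_div_sq_of_hasDerivAt_zero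
    (f' := fun s => dot2 (γ t - γ (t + s)) (perp (deriv (deriv γ) (t + s))))
    (fun s => ((hasDerivAt_chord (hγ.differentiable (by norm_num)) s).dot2
      (hasDerivAt_nor hγ₂.differentiable_deriv_two s)).congr_deriv ?_)
    (by simp [dot2]) (by simp [dot2]) ?_
  · simp [dot2, nor, perp]; ring
  · refine ((hasDerivAt_chord (hγ.differentiable (by norm_num)) 0).dot2
      ((hγ'' (t + 0)).hasDerivAt.comp_const_add t 0).perp).congr_deriv ?_
    simp [dot2, curv, nor, perp]; ring

theorem tendsto_nor_dot_nor_add (hγ : ContDiff ℝ 2 γ)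
    (hunit : dot2 (deriv γ t) (deriv γ t) = 1) :
    Tendsto (fun s => dot2 (nor γ t) (nor γ (t + s))) (𝓝[≠] 0) (𝓝 1) := by
  refine tendsto_nhdsWithin_of_tendsto_nhds ?_
  have h := ((hasDerivAt_const 0 (nor γ t)).dot2
    (hasDerivAt_nor (t := t) hγ.differentiable_deriv_two 0)).continuousAt.tendsto
  rwa [add_zero, nor_eq_perp γ t, dot2_perp_perp, hunit] at h

theorem tendsto_chord_dot_self_div_sq (hγ : ContDiff ℝ 2 γ)
    (hunit : dot2 (deriv γ t) (deriv γ t) = 1) :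
    Tendsto (fun s => dot2 (γ t - γ (t + s)) (γ t - γ (t + s)) / s ^ 2) (𝓝[≠] 0)
      (𝓝 1) := by
  have h := ((tendsto_chord_dot_tang_div (hγ.differentiable (by norm_num)) hunit).pow 2).add
    (((tendsto_chord_dot_nor_div_sq (t := t) hγ).pow 2).mul tendsto_sq_nhdsNE_zero)
  rw [neg_one_sq, mul_zero, add_zero] at h
  refine h.congr' ?_
  filter_upwards [self_mem_nhdsWithin] with s (hs : s ≠ 0)
  have hsplit : dot2 (γ t - γ (t + s)) (γ t - γ (t + s))
      = dot2 (γ t - γ (t + s)) (tang γ t) ^ 2 + dot2 (γ t - γ (t + s)) (nor γ t) ^ 2 :=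
    dot2_self_eq_sq_add_sq hunit _
  rw [hsplit]
  field_simp

theorem tendsto_GB_nx_nx_ny (hγ : ContDiff ℝ 3 γ)
    (hunit : dot2 (deriv γ t) (deriv γ t) = 1) :
    Tendsto (fun s => GB_nx_nx_ny γ t (γ t) (t + s)) (𝓝[≠] 0)
      (𝓝 (-curv γ t / (8 * π))) := by
  have hγ₂ : ContDiff ℝ 2 γ := hγ.of_le (by norm_num)
  have ha := tendsto_chord_dot_nor_div_sq (t := t) hγ₂
  have hc := tendsto_chord_dot_self_div_sq hγ₂ hunit
  have hd := tendsto_chord_dot_nor_add_div_sq (t := t) hγ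
  have he := tendsto_nor_dot_nor_add hγ₂ hunit
  have h := ((((ha.const_mul (-(1 / (2 * π)))).mul he).div hc one_ne_zero).add
    ((((hd.const_mul (1 / (2 * π))).mul (ha.pow 2)).div (hc.pow 2) (by norm_num)).mul
      tendsto_sq_nhdsNE_zero)).sub
    ((hd.const_mul (1 / (4 * π))).div hc one_ne_zero)
  convert h.congr' ?_ using 2
  · field_simp; ring
  · filter_upwards [self_mem_nhdsWithin] with s (hs : s ≠ 0)
    simp only [GB_nx_nx_ny, Pi.div_apply]
    -- for a chord of length `0` both sides are `0`, by `x / 0 = 0`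
    rcases eq_or_ne (dot2 (γ t - γ (t + s)) (γ t - γ (t + s))) 0 with hC | hC
    · simp [hC]
    · field_simp

theorem tendsto_GB_tx_tx_ny (hγ : ContDiff ℝ 3 γ)
    (hunit : dot2 (deriv γ t) (deriv γ t) = 1) :
    Tendsto (fun s => GB_tx_tx_ny γ t (γ t) (t + s)) (𝓝[≠] 0)
      (𝓝 (3 * curv γ t / (8 * π))) := by
  have hγ₂ : ContDiff ℝ 2 γ := hγ.of_le (by norm_num)
  have hb := tendsto_chord_dot_tang_div (hγ.differentiable (by norm_num)) hunit
  have hc := tendsto_chord_dot_self_div_sq hγ₂ hunit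
  have hd := tendsto_chord_dot_nor_add_div_sq (t := t) hγ
  have hT := tendsto_tang_dot_nor_add_div (t := t) hγ₂
  have h := ((((hb.const_mul (-(1 / (2 * π)))).mul hT).div hc one_ne_zero).add
    (((hd.const_mul (1 / (2 * π))).mul (hb.pow 2)).div (hc.pow 2) (by norm_num))).sub
    ((hd.const_mul (1 / (4 * π))).div hc one_ne_zero)
  convert h.congr' ?_ using 2
  · field_simp; ring
  · filter_upwards [self_mem_nhdsWithin] with s (hs : s ≠ 0)
    simp only [GB_tx_tx_ny, Pi.div_apply]
    rcases eq_or_ne (dot2 (γ t - γ (t + s)) (γ t - γ (t + s))) 0 with hC | hC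
    · simp [hC]
    · field_simp

end PlaneCurve

theorem stmt6_general (γ : ℝ → ℝ × ℝ)
    (hγ : ContDiff ℝ (⊤ : ℕ∞) γ)
    (harc : ∀ s, dot2 (deriv γ s) (deriv γ s) = 1)
    (ν : ℝ) (t : ℝ) :
    Tendsto
      (fun s : ℝ => GB_nx_nx_ny γ t (γ t) (t + s) + ν * GB_tx_tx_ny γ t (γ t) (t + s))
      (𝓝[≠] (0 : ℝ)) (𝓝 ((3 * ν - 1) * curv γ t / (8 * π))) := by
  have hγ₃ : ContDiff ℝ 3 γ := hγ.of_le (WithTop.coe_le_coe.mpr le_top)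
  convert (tendsto_GB_nx_nx_ny hγ₃ (harc t)).add
    ((tendsto_GB_tx_tx_ny hγ₃ (harc t)).const_mul ν) using 2
  ring

theorem stmt6 (L : ℝ) (hL : 0 < L) (γ : ℝ → ℝ × ℝ)
    (hγ : ContDiff ℝ (⊤ : ℕ∞) γ)
    (hper : ∀ s, γ (s + L) = γ s)
    (hinj : Set.InjOn γ (Set.Ico 0 L))
    (harc : ∀ s, dot2 (deriv γ s) (deriv γ s) = 1)
    (ν : ℝ) (t : ℝ) :
    Tendsto
      (fun s : ℝ => GB_nx_nx_ny γ t (γ t) (t + s) + ν * GB_tx_tx_ny γ t (γ t) (t + s))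
      (𝓝[≠] (0 : ℝ)) (𝓝 ((3 * ν - 1) * curv γ t / (8 * π))) :=
  stmt6_general γ hγ harc ν t
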